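/- Let H be a real Hilbert space and let the index set {1,…,t} be partitioned into H₀ slices I₁,…,I_{H₀} with |I_h| = n_h > 0. Let φ_i, φ̃_i ∈ H with ‖φ_i‖ ≤ M₀ and ‖φ̃_i - φ_i‖² ≤ ν. Define slice means ψ_h = (1/n_h)∑_{i∈I_h} φ_i and ψ̃_h = (1/n_h)∑_{i∈I_h} φ̃_i, and Γ̂ = ∑_h (n_h/t) ψ_h ⊗ ψ_h, Γ̃ = ∑_h (n_h/t) ψ̃_h ⊗ ψ̃_h. Then ‖Γ̃ - Γ̂‖_HS ≤ ν + 2 M₀ √ν. -/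

import Mathlib

/-!
Slice by slice, `ψ̃ ⊗ ψ̃ - ψ ⊗ ψ = (ψ̃ - ψ) ⊗ ψ̃ + ψ ⊗ (ψ̃ - ψ)`, and Parseval gives
`‖x ⊗ y‖_HS = ‖x‖ ‖y‖`. As averages, `‖ψ̃_h - ψ_h‖ ≤ √ν` and `‖ψ_h‖ ≤ M₀`, hence
`‖ψ̃_h‖ ≤ M₀ + √ν`, so every slice contributes at most `ν + 2 M₀ √ν`; the weights `n_h / t`
sum to `1`. The triangle inequality for `‖·‖_HS` comes from viewing it as the `ℓ²`-norm of the
family `(T bᵢ)ᵢ`.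
-/

open scoped RealInnerProductSpace
open Finset

variable {H : Type*} [NormedAddCommGroup H] [InnerProductSpace ℝ H]

noncomputable def rankOne (x y : H) : H →L[ℝ] H :=
  (innerSL ℝ y).smulRight x

noncomputable def hsNorm {ι : Type*} (b : HilbertBasis ι ℝ H) (T : H →L[ℝ] H) : ℝ :=
  Real.sqrt (∑' i, ‖T (b i)‖ ^ 2)

section RankOne

@[simp]
lemma rankOne_apply (x y w : H) : rankOne x y w = ⟪y, w⟫ • x := rfl

lemma rankOne_self_sub_rankOne_self (x y : H) :
    rankOne x x - rankOne y y = rankOne (x - y) x + rankOne y (x - y) := by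
  ext w
  simp only [rankOne_apply, sub_apply, add_apply, inner_sub_left, sub_smul, smul_sub]
  abel

end RankOne

namespace HilbertBasis

variable {ι : Type*} (b : HilbertBasis ι ℝ H)

lemma hasSum_inner_sq (y : H) : HasSum (fun i => ⟪y, b i⟫ ^ 2) (‖y‖ ^ 2) := by
  simpa only [sq, real_inner_comm y, real_inner_self_eq_norm_sq] using
    b.hasSum_inner_mul_inner y y

lemma hasSum_norm_rankOne_apply_sq (x y : H) :
    HasSum (fun i => ‖rankOne x y (b i)‖ ^ 2) (‖x‖ ^ 2 * ‖y‖ ^ 2) := by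
  simpa only [rankOne_apply, norm_smul, mul_pow, Real.norm_eq_abs, sq_abs, mul_comm _ (‖x‖ ^ 2)]
    using (b.hasSum_inner_sq y).mul_left (‖x‖ ^ 2)

def hilbertSchmidt : Submodule ℝ (H →L[ℝ] H) where
  carrier := {T | Memℓp (fun i => T (b i)) 2}
  add_mem' hS hT := hS.add hT
  zero_mem' := zero_memℓp
  smul_mem' c _ hT := hT.const_smul c

lemma mem_hilbertSchmidt_iff (T : H →L[ℝ] H) :
    T ∈ b.hilbertSchmidt ↔ Summable fun i => ‖T (b i)‖ ^ 2 := by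
  rw [hilbertSchmidt, Submodule.mem_mk, AddSubmonoid.mem_mk, AddSubsemigroup.mem_mk,
    Set.mem_ofPred_eq, memℓp_gen_iff (by norm_num)]
  norm_num

noncomputable def hilbertSchmidtToLp : b.hilbertSchmidt →ₗ[ℝ] lp (fun _ : ι => H) 2 where
  toFun T := ⟨fun i => T.1 (b i), T.2⟩
  map_add' _ _ := rfl
  map_smul' _ _ := rfl

lemma hsNorm_eq_norm_hilbertSchmidtToLp (T : b.hilbertSchmidt) :
    hsNorm b T = ‖b.hilbertSchmidtToLp T‖ := by
  have h := lp.norm_rpow_eq_tsum (p := 2) (by norm_num) (b.hilbertSchmidtToLp T)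
  norm_num at h
  rw [hsNorm, ← Real.sqrt_sq (norm_nonneg (b.hilbertSchmidtToLp T)), h]
  rfl

lemma rankOne_mem_hilbertSchmidt (x y : H) : rankOne x y ∈ b.hilbertSchmidt :=
  (b.mem_hilbertSchmidt_iff _).2 (b.hasSum_norm_rankOne_apply_sq x y).summable

end HilbertBasis

section HSNorm

variable {ι : Type*} (b : HilbertBasis ι ℝ H)

lemma hsNorm_rankOne (x y : H) : hsNorm b (rankOne x y) = ‖x‖ * ‖y‖ := by
  rw [hsNorm, (b.hasSum_norm_rankOne_apply_sq x y).tsum_eq, ← mul_pow,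
    Real.sqrt_sq (by positivity)]

lemma hsNorm_sum_le {α : Type*} (s : Finset α) (A : α → H →L[ℝ] H)
    (hA : ∀ a ∈ s, A a ∈ b.hilbertSchmidt) :
    hsNorm b (∑ a ∈ s, A a) ≤ ∑ a ∈ s, hsNorm b (A a) := by
  let B : s → b.hilbertSchmidt := fun a => ⟨A a, hA a a.2⟩
  have hsum : ∑ a ∈ s, A a = ((∑ a, B a : b.hilbertSchmidt) : H →L[ℝ] H) := by
    rw [Submodule.coe_sum, ← Finset.sum_coe_sort s]
  calc hsNorm b (∑ a ∈ s, A a) = ‖∑ a, b.hilbertSchmidtToLp (B a)‖ := by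
        rw [hsum, b.hsNorm_eq_norm_hilbertSchmidtToLp, map_sum]
    _ ≤ ∑ a, ‖b.hilbertSchmidtToLp (B a)‖ := norm_sum_le _ _
    _ = ∑ a ∈ s, hsNorm b (A a) := by
        simp only [← b.hsNorm_eq_norm_hilbertSchmidtToLp, B]
        exact Finset.sum_coe_sort s fun a => hsNorm b (A a)

lemma hsNorm_add_le {S T : H →L[ℝ] H} (hS : S ∈ b.hilbertSchmidt) (hT : T ∈ b.hilbertSchmidt) :
    hsNorm b (S + T) ≤ hsNorm b S + hsNorm b T := by
  simpa using hsNorm_sum_le b Finset.univ ![S, T] (by simp [Fin.forall_fin_two, hS, hT])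

lemma hsNorm_smul (c : ℝ) (T : H →L[ℝ] H) : hsNorm b (c • T) = |c| * hsNorm b T := by
  simp only [hsNorm, smul_apply, norm_smul, mul_pow, Real.norm_eq_abs, sq_abs, tsum_mul_left]
  rw [Real.sqrt_mul (sq_nonneg c), Real.sqrt_sq_eq_abs]

lemma hsNorm_rankOne_self_sub_rankOne_self_le {x y : H} {M δ : ℝ} (hy : ‖y‖ ≤ M)
    (hxy : ‖x - y‖ ≤ δ) : hsNorm b (rankOne x x - rankOne y y) ≤ δ ^ 2 + 2 * M * δ := by
  have hx : ‖x‖ ≤ M + δ := (norm_le_norm_add_norm_sub' x y).trans (add_le_add hy hxy)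
  have hδ : 0 ≤ δ := (norm_nonneg _).trans hxy
  calc hsNorm b (rankOne x x - rankOne y y)
      ≤ hsNorm b (rankOne (x - y) x) + hsNorm b (rankOne y (x - y)) := by
        rw [rankOne_self_sub_rankOne_self]
        exact hsNorm_add_le b (b.rankOne_mem_hilbertSchmidt _ _) (b.rankOne_mem_hilbertSchmidt _ _)
    _ = ‖x - y‖ * ‖x‖ + ‖y‖ * ‖x - y‖ := by rw [hsNorm_rankOne, hsNorm_rankOne]
    _ ≤ δ * (M + δ) + M * δ := by gcongr; exact (norm_nonneg _).trans hy
    _ = δ ^ 2 + 2 * M * δ := by ring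

end HSNorm

lemma norm_inv_card_smul_sum_le {α E : Type*} [SeminormedAddCommGroup E] [NormedSpace ℝ E]
    {s : Finset α} {f : α → E} {C : ℝ} (hC : 0 ≤ C) (hf : ∀ i ∈ s, ‖f i‖ ≤ C) :
    ‖(#s : ℝ)⁻¹ • ∑ i ∈ s, f i‖ ≤ C := by
  rcases s.eq_empty_or_nonempty with rfl | hs
  · simpa using hC
  have hcard : (0 : ℝ) < #s := by exact_mod_cast hs.card_pos
  rw [norm_smul, norm_inv, Real.norm_natCast, inv_mul_le_iff₀ hcard]
  calc ‖∑ i ∈ s, f i‖ ≤ ∑ i ∈ s, ‖f i‖ := norm_sum_le _ _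
    _ ≤ #s * C := by simpa using Finset.sum_le_sum hf

theorem sliced_mean_dictionary_error_general {ι : Type*} (b : HilbertBasis ι ℝ H)
    {t H₀ : ℕ} (ht : 0 < t)
    (slice : Fin t → Fin H₀)
    (nh : Fin H₀ → ℕ) (hnh : ∀ h, nh h = (univ.filter fun i => slice i = h).card)
    (φ φtil : Fin t → H) (M₀ ν : ℝ) (hν : 0 ≤ ν)
    (hφ : ∀ i, ‖φ i‖ ≤ M₀) (hres : ∀ i, ‖φtil i - φ i‖ ^ 2 ≤ ν)
    (ψ ψtil : Fin H₀ → H)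
    (hψ : ∀ h, ψ h = (nh h : ℝ)⁻¹ • ∑ i ∈ univ.filter fun i => slice i = h, φ i)
    (hψtil : ∀ h, ψtil h = (nh h : ℝ)⁻¹ • ∑ i ∈ univ.filter fun i => slice i = h, φtil i)
    (Ghat Gtil : H →L[ℝ] H)
    (hGhat : Ghat = ∑ h, ((nh h : ℝ) / t) • rankOne (ψ h) (ψ h))
    (hGtil : Gtil = ∑ h, ((nh h : ℝ) / t) • rankOne (ψtil h) (ψtil h)) :
    hsNorm b (Gtil - Ghat) ≤ ν + 2 * M₀ * Real.sqrt ν := by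
  have hM₀ : 0 ≤ M₀ := (norm_nonneg _).trans (hφ ⟨0, ht⟩)
  have hψ_le (h : Fin H₀) : ‖ψ h‖ ≤ M₀ := by
    rw [hψ, hnh]
    exact norm_inv_card_smul_sum_le hM₀ fun i _ => hφ i
  have hψtil_sub_le (h : Fin H₀) : ‖ψtil h - ψ h‖ ≤ √ν := by
    rw [hψtil, hψ, ← smul_sub, ← sum_sub_distrib, hnh]
    exact norm_inv_card_smul_sum_le (Real.sqrt_nonneg ν) fun i _ =>
      Real.le_sqrt_of_sq_le (hres i)
  have hweights : ∑ h, (nh h : ℝ) / t = 1 := by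
    rw [← sum_div, ← Nat.cast_sum, div_eq_one_iff_eq (by positivity), Nat.cast_inj]
    simpa [hnh] using sum_card_fiberwise_eq_card_filter univ univ slice
  calc hsNorm b (Gtil - Ghat)
      = hsNorm b (∑ h, ((nh h : ℝ) / t) • (rankOne (ψtil h) (ψtil h) - rankOne (ψ h) (ψ h))) := by
        simp only [hGtil, hGhat, ← sum_sub_distrib, smul_sub]
    _ ≤ ∑ h, (nh h : ℝ) / t * hsNorm b (rankOne (ψtil h) (ψtil h) - rankOne (ψ h) (ψ h)) := by
        refine (hsNorm_sum_le b _ _ fun h _ => ?_).trans_eq ?_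
        · exact Submodule.smul_mem _ _ (sub_mem (b.rankOne_mem_hilbertSchmidt _ _)
            (b.rankOne_mem_hilbertSchmidt _ _))
        · simp only [hsNorm_smul, abs_of_nonneg (by positivity : (0 : ℝ) ≤ (nh _ : ℝ) / t)]
    _ ≤ ∑ h, (nh h : ℝ) / t * (ν + 2 * M₀ * √ν) := by
        gcongr with h
        simpa only [Real.sq_sqrt hν] using
          hsNorm_rankOne_self_sub_rankOne_self_le b (hψ_le h) (hψtil_sub_le h)
    _ = ν + 2 * M₀ * √ν := by rw [← sum_mul, hweights, one_mul]

theorem sliced_mean_dictionary_error [CompleteSpace H] {ι : Type*} (b : HilbertBasis ι ℝ H)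
    {t H₀ : ℕ} (ht : 0 < t)
    (slice : Fin t → Fin H₀)
    (nh : Fin H₀ → ℕ) (hnh : ∀ h, nh h = (univ.filter fun i => slice i = h).card)
    (hpos : ∀ h, 0 < nh h)
    (φ φtil : Fin t → H) (M₀ ν : ℝ) (hν : 0 ≤ ν)
    (hφ : ∀ i, ‖φ i‖ ≤ M₀) (hres : ∀ i, ‖φtil i - φ i‖ ^ 2 ≤ ν)
    (ψ ψtil : Fin H₀ → H)
    (hψ : ∀ h, ψ h = (nh h : ℝ)⁻¹ • ∑ i ∈ univ.filter fun i => slice i = h, φ i)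
    (hψtil : ∀ h, ψtil h = (nh h : ℝ)⁻¹ • ∑ i ∈ univ.filter fun i => slice i = h, φtil i)
    (Ghat Gtil : H →L[ℝ] H)
    (hGhat : Ghat = ∑ h, ((nh h : ℝ) / t) • rankOne (ψ h) (ψ h))
    (hGtil : Gtil = ∑ h, ((nh h : ℝ) / t) • rankOne (ψtil h) (ψtil h)) :
    hsNorm b (Gtil - Ghat) ≤ ν + 2 * M₀ * Real.sqrt ν :=
  sliced_mean_dictionary_error_general b ht slice nh hnh φ φtil M₀ ν hν hφ hres ψ ψtil hψ hψtil Ghat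
    Gtil hGhat hGtil
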